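/- Under the sketch-and-project setup, for every realization of the sketching matrices and every k ≥ λ − 1: σ_min(AB^{-1/2})⁴ ‖x_k − x*‖_B⁴ ≤ ι_k^λ ≤ M_{k−λ+1}⁴, where σ_min(AB^{-1/2}) is the smallest nonzero singular value of AB^{-1/2}. -/

import Mathlib

open MeasureTheory ProbabilityTheory Matrix Finset Filter

noncomputable section

/-- The Moore–Penrose pseudoinverse of a real matrix, defined via classical choice
as a matrix satisfying the four Penrose equations (such a matrix exists and is unique). -/
noncomputable def mpinv {a b : ℕ} (M : Matrix (Fin a) (Fin b) ℝ) : Matrix (Fin b) (Fin a) ℝ :=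
  Classical.epsilon fun X => M * X * M = M ∧ X * M * X = X ∧ (M * X)ᵀ = M * X ∧ (X * M)ᵀ = X * M

/-- The Euclidean norm of a vector in `Fin a → ℝ`. -/
noncomputable def nrm2 {a : ℕ} (v : Fin a → ℝ) : ℝ := Real.sqrt (∑ i, v i ^ 2)

/-- The spectral norm (ℓ₂ operator norm) of a matrix. -/
noncomputable def specNorm {a b : ℕ} (M : Matrix (Fin a) (Fin b) ℝ) : ℝ :=
  sInf {c | 0 ≤ c ∧ ∀ v, nrm2 (M *ᵥ v) ≤ c * nrm2 v}

/-- The row space of a matrix, as a submodule of `Fin b → ℝ`. -/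
def rowSpace {a b : ℕ} (M : Matrix (Fin a) (Fin b) ℝ) : Submodule ℝ (Fin b → ℝ) :=
  Submodule.span ℝ (Set.range M)

/-- The column space of a matrix, as a submodule of `Fin a → ℝ`. -/
def colSpace {a b : ℕ} (M : Matrix (Fin a) (Fin b) ℝ) : Submodule ℝ (Fin a → ℝ) :=
  rowSpace Mᵀ

/-- One step of the sketch-and-project iteration:
`x ↦ x − B⁻¹Aᵀ Sₖ (Sₖᵀ A B⁻¹ Aᵀ Sₖ)† Sₖᵀ (A x − b)`. -/
noncomputable def spStep {m n p : ℕ} (A : Matrix (Fin m) (Fin n) ℝ)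
    (B : Matrix (Fin n) (Fin n) ℝ) (b : Fin m → ℝ)
    (Sk : Matrix (Fin m) (Fin p) ℝ) (xk : Fin n → ℝ) : Fin n → ℝ :=
  xk - (B⁻¹ * Aᵀ * Sk * mpinv (Skᵀ * A * B⁻¹ * Aᵀ * Sk) * Skᵀ) *ᵥ (A *ᵥ xk - b)

instance matrixMeasurableSpace {a b : ℕ} : MeasurableSpace (Matrix (Fin a) (Fin b) ℝ) :=
  MeasurableSpace.pi

/-- The `(C, ω)` sub-exponential Johnson–Lindenstrauss property of a random `m × p` matrix. -/
def jlProperty {m p : ℕ} {Ω : Type*} [MeasurableSpace Ω] (μ : Measure Ω)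
    (S : Ω → Matrix (Fin m) (Fin p) ℝ) (C ω : ℝ) : Prop :=
  0 < C ∧ 0 < ω ∧ ∀ z : Fin m → ℝ,
    (∀ t : ℝ, |t| ≤ 1 / ω →
      ∫ a, Real.exp (t * (nrm2 ((S a)ᵀ *ᵥ z) ^ 2 - nrm2 z ^ 2)) ∂μ ≤
        Real.exp (t ^ 2 * nrm2 z ^ 4 / (2 * C * p))) ∧
    (∀ δ : ℝ, 0 < δ →
      μ {a | δ * nrm2 z ^ 2 < |nrm2 ((S a)ᵀ *ᵥ z) ^ 2 - nrm2 z ^ 2|} ≤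
        ENNReal.ofReal (2 * Real.exp (-min (C * p * δ ^ 2) (C * p * δ / ω))))

/-- `σ`-algebra generated by the sketching matrices `S₁, …, S_j`. -/
def sigmaF {m p : ℕ} {Ω : Type*} [MeasurableSpace Ω]
    (S : ℕ → Ω → Matrix (Fin m) (Fin p) ℝ) (j : ℕ) : MeasurableSpace Ω :=
  ⨆ i ∈ Finset.Icc 1 j, MeasurableSpace.comap (S i) inferInstance

/-- The smallest nonzero singular value of a matrix. -/
noncomputable def sigmaMinPos {a b : ℕ} (M : Matrix (Fin a) (Fin b) ℝ) : ℝ :=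
  sInf {c | ∃ v ∈ rowSpace M, v ≠ 0 ∧ c = nrm2 (M *ᵥ v) / nrm2 v}

/-!
With `M = A B^{-1/2}` and `y_k = B^{1/2}(x_k - x*)` the residual is `r_k = M y_k`, and one
sketch-and-project step reads `y ↦ y - P y`, where `P = Dᵀ(DDᵀ)†D` with `D = Sᵀ M` is the
orthogonal projection onto the row space of `D`, a subspace of the row space of `M`. So `‖y_k‖`
is nonincreasing, and since `x*` is the `B`-projection of `x₀` onto the solution set, `y₀`, hence
every `y_k`, lies in the row space of `M`, where `σ_min(M) ‖y‖ ≤ ‖M y‖ ≤ ‖M‖ ‖y‖`. Every residual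
of the window `k - λ + 1, …, k` is therefore between `σ_min(M) ‖y_k‖` and `‖M‖ ‖y_{k-λ+1}‖`, and so
is the mean of their fourth powers.
-/

open scoped BigOperators

section Norms

variable {a b : ℕ}

lemma nrm2_nonneg (v : Fin a → ℝ) : 0 ≤ nrm2 v := Real.sqrt_nonneg _

lemma nrm2_sq (v : Fin a → ℝ) : nrm2 v ^ 2 = v ⬝ᵥ v := by
  rw [nrm2, Real.sq_sqrt (by positivity)]
  simp [dotProduct, sq]

lemma nrm2_le_nrm2_iff {u : Fin a → ℝ} {v : Fin b → ℝ} : nrm2 u ≤ nrm2 v ↔ u ⬝ᵥ u ≤ v ⬝ᵥ v := by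
  rw [← nrm2_sq, ← nrm2_sq, sq_le_sq₀ (nrm2_nonneg u) (nrm2_nonneg v)]

lemma nrm2_eq_norm (v : Fin a → ℝ) : nrm2 v = ‖(WithLp.toLp 2 v : EuclideanSpace ℝ (Fin a))‖ := by
  simp [nrm2, EuclideanSpace.norm_eq]

lemma nrm2_pos {v : Fin a → ℝ} (hv : v ≠ 0) : 0 < nrm2 v := by
  rw [nrm2_eq_norm]; simpa using hv

lemma specNorm_eq_opNorm (M : Matrix (Fin a) (Fin b) ℝ) :
    specNorm M = ‖LinearMap.toContinuousLinearMap (Matrix.toEuclideanLin M)‖ := by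
  rw [specNorm, ContinuousLinearMap.norm_def]
  congr! with c
  refine ⟨fun h x => ?_, fun h v => ?_⟩
  · simpa [nrm2_eq_norm, Matrix.toLpLin_apply] using h x.ofLp
  · simpa [nrm2_eq_norm] using h (WithLp.toLp 2 v)

lemma specNorm_nonneg (M : Matrix (Fin a) (Fin b) ℝ) : 0 ≤ specNorm M := by
  rw [specNorm_eq_opNorm]; positivity

lemma nrm2_mulVec_le_specNorm_mul (M : Matrix (Fin a) (Fin b) ℝ) (v : Fin b → ℝ) :
    nrm2 (M *ᵥ v) ≤ specNorm M * nrm2 v := by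
  simpa [specNorm_eq_opNorm, nrm2_eq_norm] using
    (LinearMap.toContinuousLinearMap (Matrix.toEuclideanLin M)).le_opNorm (WithLp.toLp 2 v)

lemma sigmaMinPos_nonneg (M : Matrix (Fin a) (Fin b) ℝ) : 0 ≤ sigmaMinPos M :=
  Real.sInf_nonneg <| by rintro _ ⟨v, -, -, rfl⟩; exact div_nonneg (nrm2_nonneg _) (nrm2_nonneg _)

lemma sigmaMinPos_mul_nrm2_le {M : Matrix (Fin a) (Fin b) ℝ} {v : Fin b → ℝ}
    (hv : v ∈ rowSpace M) : sigmaMinPos M * nrm2 v ≤ nrm2 (M *ᵥ v) := by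
  rcases eq_or_ne v 0 with rfl | hv0
  · simp [nrm2]
  rw [← le_div_iff₀ (nrm2_pos hv0)]
  refine csInf_le ⟨0, ?_⟩ ⟨v, hv, hv0, rfl⟩
  rintro _ ⟨w, -, -, rfl⟩
  exact div_nonneg (nrm2_nonneg _) (nrm2_nonneg _)

end Norms

section RowSpace

variable {a b : ℕ}

lemma rowSpace_eq_range (M : Matrix (Fin a) (Fin b) ℝ) :
    rowSpace M = LinearMap.range Mᵀ.mulVecLin := by
  rw [Matrix.range_mulVecLin, col_transpose]; rfl

lemma transpose_mulVec_mem_rowSpace (M : Matrix (Fin a) (Fin b) ℝ) (u : Fin a → ℝ) :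
    Mᵀ *ᵥ u ∈ rowSpace M := by
  rw [rowSpace_eq_range]; exact ⟨u, rfl⟩

lemma isCompl_rowSpace_ker (M : Matrix (Fin a) (Fin b) ℝ) :
    IsCompl (rowSpace M) (LinearMap.ker M.mulVecLin) := by
  refine (Submodule.isCompl_iff_disjoint _ _ ?_).mpr ?_
  · rw [rowSpace_eq_range, ← Matrix.rank, Matrix.rank_transpose]
    exact (LinearMap.finrank_range_add_finrank_ker M.mulVecLin).ge
  · rw [Submodule.disjoint_def, rowSpace_eq_range]
    rintro _ ⟨u, rfl⟩ (hu : M *ᵥ (Mᵀ *ᵥ u) = 0)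
    rw [Matrix.mulVec_mulVec, ← conjTranspose_eq_transpose_of_trivial,
      self_mul_conjTranspose_mulVec_eq_zero] at hu
    rwa [conjTranspose_eq_transpose_of_trivial] at hu

lemma mem_rowSpace_of_forall_nrm2_le {M : Matrix (Fin a) (Fin b) ℝ} {y : Fin b → ℝ}
    (h : ∀ w, M *ᵥ w = 0 → nrm2 y ≤ nrm2 (y - w)) : y ∈ rowSpace M := by
  obtain ⟨r, hr, w, hw, rfl⟩ :=
    Submodule.mem_sup.mp ((isCompl_rowSpace_ker M).sup_eq_top ▸ Submodule.mem_top (x := y))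
  rw [rowSpace_eq_range] at hr
  obtain ⟨u, rfl⟩ : ∃ u, Mᵀ *ᵥ u = r := hr
  have hw : M *ᵥ w = 0 := hw
  have horth : (Mᵀ *ᵥ u) ⬝ᵥ w = 0 := by
    rw [Matrix.mulVec_transpose, ← Matrix.dotProduct_mulVec, hw, dotProduct_zero]
  have hle := h w hw
  rw [add_sub_cancel_right, nrm2_le_nrm2_iff, add_dotProduct, dotProduct_add, dotProduct_add,
    dotProduct_comm w, horth] at hle
  have hw0 : w = 0 :=
    dotProduct_self_eq_zero.mp <| le_antisymm (by linarith) (by rw [← nrm2_sq]; positivity)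
  rw [hw0, add_zero]
  exact transpose_mulVec_mem_rowSpace M u

end RowSpace

section Projection

-- The pseudoinverse is `cfc (·⁻¹) G`: in `ℝ`, `0⁻¹ = 0` inverts exactly the nonzero eigenvalues.
lemma exists_penrose_of_transpose_eq {q : ℕ} {G : Matrix (Fin q) (Fin q) ℝ} (hG : Gᵀ = G) :
    ∃ X : Matrix (Fin q) (Fin q) ℝ,
      G * X * G = G ∧ X * G * X = X ∧ (G * X)ᵀ = G * X ∧ (X * G)ᵀ = X * G := by
  have hsa : IsSelfAdjoint G := by
    rwa [IsSelfAdjoint, star_eq_conjTranspose, conjTranspose_eq_transpose_of_trivial]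
  have hsymm (f : ℝ → ℝ) : (cfc f G)ᵀ = cfc f G := by
    simpa [IsSelfAdjoint, star_eq_conjTranspose, conjTranspose_eq_transpose_of_trivial]
      using cfc_predicate f G
  have hmul (f g : ℝ → ℝ) : cfc f G * cfc g G = cfc (fun t => f t * g t) G :=
    (cfc_mul f g G (G.finite_real_spectrum.continuousOn f)
      (G.finite_real_spectrum.continuousOn g)).symm
  have hid : cfc (fun t : ℝ => t) G = G := cfc_id' ℝ G
  set X := cfc (fun t : ℝ => t⁻¹) G
  have hGX : G * X = cfc (fun t : ℝ => t * t⁻¹) G := by rw [← hmul, hid]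
  have hXG : X * G = cfc (fun t : ℝ => t⁻¹ * t) G := by rw [← hmul, hid]
  refine ⟨X, ?_, ?_, by rw [hGX, hsymm], by rw [hXG, hsymm]⟩
  · calc G * X * G = cfc (fun t : ℝ => t * t⁻¹) G * cfc (fun t : ℝ => t) G := by rw [hGX, hid]
      _ = G := by rw [hmul]; simp only [mul_inv_mul_cancel, hid]
  · calc X * G * X = cfc (fun t : ℝ => t⁻¹ * t * t⁻¹) G := by rw [hXG, hmul]
      _ = X := by congr 1; funext t; simpa using mul_inv_mul_cancel t⁻¹

lemma mul_mpinv_mul_of_transpose_eq {q : ℕ} {G : Matrix (Fin q) (Fin q) ℝ} (hG : Gᵀ = G) :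
    G * mpinv G * G = G :=
  (Classical.epsilon_spec (exists_penrose_of_transpose_eq hG)).1

def rowProj {p n : ℕ} (D : Matrix (Fin p) (Fin n) ℝ) : Matrix (Fin n) (Fin n) ℝ :=
  Dᵀ * mpinv (D * Dᵀ) * D

variable {p n : ℕ}

-- `D Dᵀ (X D Dᵀ - 1) = 0` for any `X` with `D Dᵀ X D Dᵀ = D Dᵀ`, and `ker (D Dᵀ) = ker Dᵀ`.
lemma rowProj_mul_transpose (D : Matrix (Fin p) (Fin n) ℝ) : rowProj D * Dᵀ = Dᵀ := by
  have hG : D * Dᵀ * mpinv (D * Dᵀ) * (D * Dᵀ) = D * Dᵀ :=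
    mul_mpinv_mul_of_transpose_eq (by rw [transpose_mul, transpose_transpose])
  have h := (self_mul_conjTranspose_mul_eq_zero D (mpinv (D * Dᵀ) * (D * Dᵀ) - 1)).mp <| by
    rw [conjTranspose_eq_transpose_of_trivial, Matrix.mul_sub, ← Matrix.mul_assoc, hG,
      Matrix.mul_one, sub_self]
  rw [conjTranspose_eq_transpose_of_trivial, Matrix.mul_sub, Matrix.mul_one, sub_eq_zero] at h
  simpa only [rowProj, Matrix.mul_assoc] using h

lemma rowProj_mul_transpose_self (D : Matrix (Fin p) (Fin n) ℝ) :
    rowProj D * (rowProj D)ᵀ = rowProj D := by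
  have h : D * (rowProj D)ᵀ = D := by
    simpa only [transpose_mul, transpose_transpose] using
      congrArg transpose (rowProj_mul_transpose D)
  rw [rowProj, Matrix.mul_assoc _ D, ← rowProj, h, rowProj]

lemma rowProj_transpose (D : Matrix (Fin p) (Fin n) ℝ) : (rowProj D)ᵀ = rowProj D := by
  conv_lhs => rw [← rowProj_mul_transpose_self]
  rw [transpose_mul, transpose_transpose, rowProj_mul_transpose_self]

lemma rowProj_mul_self (D : Matrix (Fin p) (Fin n) ℝ) : rowProj D * rowProj D = rowProj D := by
  nth_rw 2 [← rowProj_transpose D]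
  exact rowProj_mul_transpose_self D

lemma nrm2_sub_mulVec_le {P : Matrix (Fin n) (Fin n) ℝ} (hPT : Pᵀ = P) (hPP : P * P = P)
    (y : Fin n → ℝ) : nrm2 (y - P *ᵥ y) ≤ nrm2 y := by
  have hPy : (P *ᵥ y) ⬝ᵥ (P *ᵥ y) = y ⬝ᵥ (P *ᵥ y) := by
    rw [dotProduct_mulVec, ← mulVec_transpose, hPT, mulVec_mulVec, hPP, dotProduct_comm]
  rw [nrm2_le_nrm2_iff, sub_dotProduct, dotProduct_sub, dotProduct_sub, dotProduct_comm (P *ᵥ y),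
    hPy, ← nrm2_sq]
  nlinarith [nrm2_sq (P *ᵥ y)]

lemma rowProj_mulVec_mem_rowSpace {q : ℕ} (E : Matrix (Fin p) (Fin q) ℝ)
    (M : Matrix (Fin q) (Fin n) ℝ) (v : Fin n → ℝ) : rowProj (E * M) *ᵥ v ∈ rowSpace M := by
  rw [rowProj, transpose_mul, Matrix.mul_assoc, Matrix.mul_assoc, ← mulVec_mulVec]
  exact transpose_mulVec_mem_rowSpace M _

end Projection

section ScaledIteration

variable {m n : ℕ} {A : Matrix (Fin m) (Fin n) ℝ} {b : Fin m → ℝ} {H : Matrix (Fin n) (Fin n) ℝ}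
  {xstar : Fin n → ℝ}

lemma mulVec_sub_eq_of_mulVec_eq (hH : IsUnit H.det) (hsol : A *ᵥ xstar = b) (x : Fin n → ℝ) :
    A *ᵥ x - b = (A * H⁻¹) *ᵥ (H *ᵥ (x - xstar)) := by
  rw [mulVec_mulVec, nonsing_inv_mul_cancel_right _ _ hH, mulVec_sub, hsol]

lemma mulVec_spStep_sub {p : ℕ} (hH : IsUnit H.det) (hHT : Hᵀ = H) (hsol : A *ᵥ xstar = b)
    (S : Matrix (Fin m) (Fin p) ℝ) (x : Fin n → ℝ) :
    H *ᵥ (spStep A (H * H) b S x - xstar) =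
      H *ᵥ (x - xstar) - rowProj (Sᵀ * (A * H⁻¹)) *ᵥ (H *ᵥ (x - xstar)) := by
  have hMT : (A * H⁻¹)ᵀ = H⁻¹ * Aᵀ := by rw [transpose_mul, transpose_nonsing_inv, hHT]
  have hgram : Sᵀ * A * (H * H)⁻¹ * Aᵀ * S = Sᵀ * (A * H⁻¹) * (Sᵀ * (A * H⁻¹))ᵀ := by
    rw [transpose_mul, hMT, transpose_transpose, Matrix.mul_inv_rev]
    simp only [Matrix.mul_assoc]
  have hcoef : H * ((H * H)⁻¹ * Aᵀ * S * mpinv (Sᵀ * A * (H * H)⁻¹ * Aᵀ * S) * Sᵀ) * (A * H⁻¹) =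
      rowProj (Sᵀ * (A * H⁻¹)) := by
    rw [hgram, rowProj, transpose_mul, hMT, Matrix.mul_inv_rev]
    simp only [Matrix.mul_assoc, mul_nonsing_inv_cancel_left _ _ hH, transpose_transpose]
  rw [spStep, mulVec_sub_eq_of_mulVec_eq hH hsol, sub_right_comm, mulVec_sub, mulVec_mulVec,
    mulVec_mulVec, hcoef]

lemma mulVec_sub_mem_rowSpace_of_forall_nrm2_le (hH : IsUnit H.det) {x₀ : Fin n → ℝ}
    (hsol : A *ᵥ xstar = b)
    (hproj : ∀ y, A *ᵥ y = b → nrm2 (H *ᵥ (x₀ - xstar)) ≤ nrm2 (H *ᵥ (x₀ - y))) :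
    H *ᵥ (x₀ - xstar) ∈ rowSpace (A * H⁻¹) := by
  refine mem_rowSpace_of_forall_nrm2_le fun w hw => ?_
  have hsol' : A *ᵥ (xstar + H⁻¹ *ᵥ w) = b := by
    rw [mulVec_add, mulVec_mulVec, hw, hsol, add_zero]
  simpa [sub_add_eq_sub_sub, mulVec_sub, mulVec_mulVec, mul_nonsing_inv _ hH] using hproj _ hsol'

end ScaledIteration

section ProjectionSteps

variable {p q n : ℕ} {y : ℕ → Fin n → ℝ}

lemma antitone_nrm2_of_rowProj_step {D : ℕ → Matrix (Fin p) (Fin n) ℝ}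
    (hy : ∀ i, y (i + 1) = y i - rowProj (D i) *ᵥ y i) : Antitone fun i => nrm2 (y i) :=
  antitone_nat_of_succ_le fun i =>
    hy i ▸ nrm2_sub_mulVec_le (rowProj_transpose _) (rowProj_mul_self _) _

lemma mem_rowSpace_of_rowProj_step {M : Matrix (Fin q) (Fin n) ℝ}
    {E : ℕ → Matrix (Fin p) (Fin q) ℝ} (hy : ∀ i, y (i + 1) = y i - rowProj (E i * M) *ᵥ y i)
    (h0 : y 0 ∈ rowSpace M) : ∀ i, y i ∈ rowSpace M
  | 0 => h0
  | i + 1 => hy i ▸ sub_mem (mem_rowSpace_of_rowProj_step hy h0 i)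
      (rowProj_mulVec_mem_rowSpace _ _ _)

end ProjectionSteps

lemma one_div_mul_sum_Icc_eq_expect {lam k : ℕ} (hk : lam ≤ k + 1) (f : ℕ → ℝ) :
    (1 / lam : ℝ) * ∑ i ∈ Icc (k + 1 - lam) k, f i = 𝔼 i ∈ Icc (k + 1 - lam) k, f i := by
  rw [expect_eq_sum_div_card, Nat.card_Icc, show k + 1 - (k + 1 - lam) = lam by omega,
    one_div_mul_eq_div]

theorem stmt16_general {m n p : ℕ} (A : Matrix (Fin m) (Fin n) ℝ) (b : Fin m → ℝ)
    (B Bhalf : Matrix (Fin n) (Fin n) ℝ) (hB : B.PosDef)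
    (hBsymm : Bhalfᵀ = Bhalf) (hBsq : Bhalf * Bhalf = B)
    (S : ℕ → Matrix (Fin m) (Fin p) ℝ)
    (x₀ : Fin n → ℝ) (x : ℕ → Fin n → ℝ)
    (hx0 : x 0 = x₀) (hxrec : ∀ k, x (k + 1) = spStep A B b (S (k + 1)) (x k))
    (xstar : Fin n → ℝ) (hsol : A *ᵥ xstar = b)
    (hproj : ∀ y, A *ᵥ y = b →
      nrm2 (Bhalf *ᵥ (x₀ - xstar)) ≤ nrm2 (Bhalf *ᵥ (x₀ - y)))
    (lam : ℕ) (hlam : 1 ≤ lam) (k : ℕ) (hk : lam ≤ k + 1) :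
    sigmaMinPos (A * Bhalf⁻¹) ^ 4 * nrm2 (Bhalf *ᵥ (x k - xstar)) ^ 4 ≤
      (1 / lam) * ∑ i ∈ Finset.Icc (k + 1 - lam) k, nrm2 (A *ᵥ x i - b) ^ 4 ∧
    (1 / lam) * ∑ i ∈ Finset.Icc (k + 1 - lam) k, nrm2 (A *ᵥ x i - b) ^ 4 ≤
      (specNorm (A * Bhalf⁻¹) * nrm2 (Bhalf *ᵥ (x (k + 1 - lam) - xstar))) ^ 4 := by
  subst hBsq hx0
  have hH : IsUnit Bhalf.det :=
    isUnit_iff_ne_zero.mpr fun h => hB.det_pos.ne' (by rw [det_mul, h, zero_mul])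
  set M := A * Bhalf⁻¹ with hM
  set y : ℕ → Fin n → ℝ := fun i => Bhalf *ᵥ (x i - xstar) with hy
  have hyi (i : ℕ) : Bhalf *ᵥ (x i - xstar) = y i := rfl
  have hstep (i : ℕ) : y (i + 1) = y i - rowProj ((S (i + 1))ᵀ * M) *ᵥ y i := by
    simp only [hy, hxrec]; exact mulVec_spStep_sub hH hBsymm hsol _ _
  have hanti := antitone_nrm2_of_rowProj_step hstep
  have hrow := mem_rowSpace_of_rowProj_step hstep
    (mulVec_sub_mem_rowSpace_of_forall_nrm2_le hH hsol hproj)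
  have hwin : (Icc (k + 1 - lam) k).Nonempty := ⟨k, mem_Icc.mpr ⟨by omega, le_rfl⟩⟩
  simp only [one_div_mul_sum_Icc_eq_expect hk, mulVec_sub_eq_of_mulVec_eq hH hsol, ← hM, hyi]
  constructor
  · rw [← mul_pow]
    refine le_expect hwin fun i hi =>
      pow_le_pow_left₀ (mul_nonneg (sigmaMinPos_nonneg M) (nrm2_nonneg _)) ?_ 4
    calc sigmaMinPos M * nrm2 (y k) ≤ sigmaMinPos M * nrm2 (y i) :=
          mul_le_mul_of_nonneg_left (hanti (mem_Icc.mp hi).2) (sigmaMinPos_nonneg M)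
      _ ≤ nrm2 (M *ᵥ y i) := sigmaMinPos_mul_nrm2_le (hrow i)
  · refine expect_le hwin fun i hi => pow_le_pow_left₀ (nrm2_nonneg _) ?_ 4
    calc nrm2 (M *ᵥ y i) ≤ specNorm M * nrm2 (y i) := nrm2_mulVec_le_specNorm_mul M _
      _ ≤ specNorm M * nrm2 (y (k + 1 - lam)) :=
          mul_le_mul_of_nonneg_left (hanti (mem_Icc.mp hi).1) (specNorm_nonneg M)

/-- For every realization and every `k ≥ λ − 1`:
`σ_min(AB^{-1/2})⁴ ‖x_k − x*‖_B⁴ ≤ ι_k^λ ≤ M_{k−λ+1}⁴`, where `σ_min` is the smallest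
nonzero singular value. -/
theorem stmt16 {m n p : ℕ} (A : Matrix (Fin m) (Fin n) ℝ) (b : Fin m → ℝ)
    (hconsistent : ∃ y, A *ᵥ y = b)
    (B Bhalf : Matrix (Fin n) (Fin n) ℝ) (hB : B.PosDef)
    (hBsymm : Bhalfᵀ = Bhalf) (hBsq : Bhalf * Bhalf = B)
    (S : ℕ → Matrix (Fin m) (Fin p) ℝ)
    (x₀ : Fin n → ℝ) (x : ℕ → Fin n → ℝ)
    (hx0 : x 0 = x₀) (hxrec : ∀ k, x (k + 1) = spStep A B b (S (k + 1)) (x k))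
    (xstar : Fin n → ℝ) (hsol : A *ᵥ xstar = b)
    (hproj : ∀ y, A *ᵥ y = b →
      nrm2 (Bhalf *ᵥ (x₀ - xstar)) ≤ nrm2 (Bhalf *ᵥ (x₀ - y)))
    (lam : ℕ) (hlam : 1 ≤ lam) (k : ℕ) (hk : lam ≤ k + 1) :
    sigmaMinPos (A * Bhalf⁻¹) ^ 4 * nrm2 (Bhalf *ᵥ (x k - xstar)) ^ 4 ≤
      (1 / lam) * ∑ i ∈ Finset.Icc (k + 1 - lam) k, nrm2 (A *ᵥ x i - b) ^ 4 ∧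
    (1 / lam) * ∑ i ∈ Finset.Icc (k + 1 - lam) k, nrm2 (A *ᵥ x i - b) ^ 4 ≤
      (specNorm (A * Bhalf⁻¹) * nrm2 (Bhalf *ᵥ (x (k + 1 - lam) - xstar))) ^ 4 :=
  stmt16_general A b B Bhalf hB hBsymm hBsq S x₀ x hx0 hxrec xstar hsol hproj lam hlam k hk

end
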